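/- Let H1 ∈ C^{M1×N} and H2 ∈ C^{M2×N} with M1+M2 > N, and suppose Z ∈ C^{N×N} is invertible with Q1 H1 Z = C and Q2 H2 Z = S for unitary Q1, Q2 and matrices C, S satisfying C^H C + S^H S = I_N. Then Z Z^H = (H1^H H1 + H2^H H2)^{-1}. -/
import Mathlib


open Matrix

/-- If Z is invertible, Q1, Q2 are unitary, Q1 H1 Z = C, Q2 H2 Z = S, and
Cᴴ C + Sᴴ S = I, then Z Zᴴ = (H1ᴴ H1 + H2ᴴ H2)⁻¹. -/
theorem stmt_2 (M1 M2 N : ℕ)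
    (H1 : Matrix (Fin M1) (Fin N) ℂ) (H2 : Matrix (Fin M2) (Fin N) ℂ)
    (hMN : N < M1 + M2)
    (Z : Matrix (Fin N) (Fin N) ℂ) (hZ : IsUnit Z)
    (Q1 : Matrix (Fin M1) (Fin M1) ℂ) (Q2 : Matrix (Fin M2) (Fin M2) ℂ)
    (hQ1 : Q1 ∈ Matrix.unitaryGroup (Fin M1) ℂ)
    (hQ2 : Q2 ∈ Matrix.unitaryGroup (Fin M2) ℂ)
    (C : Matrix (Fin M1) (Fin N) ℂ) (S : Matrix (Fin M2) (Fin N) ℂ)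
    (hC : Q1 * H1 * Z = C) (hS : Q2 * H2 * Z = S)
    (hCS : C.conjTranspose * C + S.conjTranspose * S = 1) :
    Z * Z.conjTranspose = (H1.conjTranspose * H1 + H2.conjTranspose * H2)⁻¹ := by
  have hQ1' : Q1.conjTranspose * Q1 = 1 := by
    simpa [star_eq_conjTranspose] using (Unitary.star_mul_self_of_mem hQ1)
  have hQ2' : Q2.conjTranspose * Q2 = 1 := by
    simpa [star_eq_conjTranspose] using (Unitary.star_mul_self_of_mem hQ2)
  have h1 : C.conjTranspose * C =
      Z.conjTranspose * (H1.conjTranspose * H1 * Z) := by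
    rw [← hC]
    simp only [conjTranspose_mul, Matrix.mul_assoc]
    rw [← Matrix.mul_assoc Q1.conjTranspose, hQ1', Matrix.one_mul]
  have h2 : S.conjTranspose * S =
      Z.conjTranspose * (H2.conjTranspose * H2 * Z) := by
    rw [← hS]
    simp only [conjTranspose_mul, Matrix.mul_assoc]
    rw [← Matrix.mul_assoc Q2.conjTranspose, hQ2', Matrix.one_mul]
  have key : Z.conjTranspose * ((H1.conjTranspose * H1 + H2.conjTranspose * H2) * Z) = 1 := by
    rw [Matrix.add_mul, Matrix.mul_add, ← h1, ← h2, hCS]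
  have hZd : IsUnit Z.det := (Matrix.isUnit_iff_isUnit_det Z).mp hZ
  have hZdH : IsUnit Z.conjTranspose.det := by
    rw [Matrix.det_conjTranspose]; exact hZd.star
  have hAeq : H1.conjTranspose * H1 + H2.conjTranspose * H2 =
      (Z.conjTranspose)⁻¹ * Z⁻¹ := by
    calc H1.conjTranspose * H1 + H2.conjTranspose * H2
        = ((Z.conjTranspose)⁻¹ * Z.conjTranspose) *
            ((H1.conjTranspose * H1 + H2.conjTranspose * H2) * (Z * Z⁻¹)) := by
          rw [Matrix.nonsing_inv_mul _ hZdH, Matrix.mul_nonsing_inv _ hZd]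
          simp
      _ = (Z.conjTranspose)⁻¹ *
            (Z.conjTranspose * ((H1.conjTranspose * H1 + H2.conjTranspose * H2) * Z)) * Z⁻¹ := by
          simp only [Matrix.mul_assoc]
      _ = (Z.conjTranspose)⁻¹ * Z⁻¹ := by rw [key, Matrix.mul_one]
  rw [hAeq, Matrix.mul_inv_rev, Matrix.nonsing_inv_nonsing_inv _ hZd,
    Matrix.nonsing_inv_nonsing_inv _ hZdH]
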